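/- Let p be a prime, A a commutative ring of characteristic p, k ∈ ℕ, B = MvPolynomial (Fin k) A, and let E be a B-module with a stratification (∇_n) relative to A which moreover satisfies the composition rule ∇_m ∘ ∇_n = (∏ i, Nat.choose (m i + n i) (n i)) • ∇_{m+n} for all m, n. Set E^{(1)} = {e ∈ E | ∇_n e = 0 for all n with 0 < |n| < p}, and for i ∈ Fin k let e_i be the indicator of i. Then for each i: (a) ∇_{p·e_i} maps E^{(1)} into E^{(1)}; and (b) for all f ∈ B and e ∈ E^{(1)}, ∇_{p·e_i}(f^p • e) = f^p • ∇_{p·e_i}(e) + (∂_i f)^p • e, where ∂_i is the partial derivative in X_i. (Thus the stratification induces a connection ∇^{(1)} on E^{(1)} over the subring of p-th powers.) -/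

import Mathlib

/-- The divided-power operator `D_n` on `MvPolynomial σ R`, determined on monomials by
`D_n (X ^ m) = (∏ i, Nat.choose (m i) (n i)) • X ^ (m - n)` (componentwise truncated
subtraction). -/
noncomputable def dpOp (R : Type*) [CommRing R] (σ : Type*) [Fintype σ] (n : σ →₀ ℕ) :
    MvPolynomial σ R →ₗ[R] MvPolynomial σ R :=
  (Finsupp.lsum ℕ fun m : σ →₀ ℕ =>
    (∏ i, Nat.choose (m i) (n i)) • (MvPolynomial.monomial (m - n) : R →ₗ[R] MvPolynomial σ R))
  ∘ₗ (AddMonoidAlgebra.coeffLinearEquiv R).toLinearMap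

/-- A stratification of a `MvPolynomial (Fin k) A`-module `E` relative to `A`: a family of
`A`-linear endomorphisms `∇_n` with `∇_0 = id` satisfying the generalized Leibniz rule with
respect to the divided-power operators `D_l`. -/
structure Stratification (A : Type*) [CommRing A] (k : ℕ)
    (E : Type*) [AddCommGroup E] [Module (MvPolynomial (Fin k) A) E]
    [Module A E] [IsScalarTower A (MvPolynomial (Fin k) A) E] where
  op : (Fin k →₀ ℕ) → E →ₗ[A] E
  op_zero : op 0 = LinearMap.id
  leibniz : ∀ (n : Fin k →₀ ℕ) (f : MvPolynomial (Fin k) A) (e : E),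
    op n (f • e) = ∑ l ∈ Finset.Iic n, dpOp A (Fin k) l f • op (n - l) e

/-!
By the composition rule, whose coefficient `∏ i, (m i + n i).choose (n i)` is symmetric in `m`
and `n`, the operators `∇_n` commute; hence `∇_{p e_i}` preserves the joint kernel `E⁽¹⁾` of the
`∇_n` with `0 < |n| < p`. For `e ∈ E⁽¹⁾` the Leibniz rule for `∇_{p e_i}(g • e)` has nonzero terms
only at `l = 0` and `l = p e_i`, giving `g • ∇_{p e_i} e + D_{p e_i}(g) • e`. Finally, for
`g = f ^ p` in characteristic `p`, `D_{p e_i}(f ^ p) = (∂_i f) ^ p`: additivity of Frobenius reduces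
this to monomials, where it is the congruence `(p a).choose p ≡ a ≡ a ^ p (mod p)`.
-/

open MvPolynomial

section DividedPowers

variable {R : Type*} [CommRing R] {σ : Type*} [Fintype σ]

lemma dpOp_monomial (n m : σ →₀ ℕ) (c : R) :
    dpOp R σ n (monomial m c) = (∏ i, (m i).choose (n i)) • monomial (m - n) c := by
  classical
  exact (sum_monomial_eq (by simp)).trans rfl

@[simp]
lemma dpOp_zero : dpOp R σ 0 = LinearMap.id := by
  ext m : 2
  show dpOp R σ 0 (monomial m 1) = monomial m 1
  simp [dpOp_monomial]

lemma Nat.choose_mul_prime_modEq (p a : ℕ) [Fact p.Prime] : (p * a).choose p ≡ a [MOD p] := by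
  simpa using Choose.choose_mul_mul_modEq_choose_nat (p := p) (a := a) (b := 1)

lemma natCast_pow_char (p : ℕ) [Fact p.Prime] [CharP R p] (a : ℕ) : (a : R) ^ p = a := by
  rw [← frobenius_def, map_natCast]

lemma dpOp_single_pow_char (p : ℕ) [Fact p.Prime] [CharP R p] (i : σ) (f : MvPolynomial σ R) :
    dpOp R σ (p • Finsupp.single i 1) (f ^ p) = pderiv i f ^ p := by
  induction f using MvPolynomial.induction_on' with
  | add f g hf hg => rw [add_pow_char, map_add, hf, hg, map_add, add_pow_char]
  | monomial m c =>
    have hcoef : ∏ j, ((p • m) j).choose ((p • Finsupp.single i 1) j) = (p * m i).choose p := by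
      rw [Finset.prod_eq_single i (fun j _ hj => by simp [hj.symm]) (by simp)]
      simp
    have hcast : (((p * m i).choose p : ℕ) : R) = (m i : R) ^ p := by
      rw [natCast_pow_char, CharP.natCast_eq_natCast R p]
      exact Nat.choose_mul_prime_modEq p (m i)
    have hexp : p • m - p • Finsupp.single i 1 = p • (m - Finsupp.single i 1) := by
      ext j
      simp only [Finsupp.tsub_apply, Finsupp.smul_apply, smul_eq_mul, Nat.mul_sub]
    rw [monomial_pow, dpOp_monomial, pderiv_monomial, monomial_pow, hcoef, smul_monomial, hexp,
      nsmul_eq_mul, hcast, mul_pow, mul_comm]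

end DividedPowers

lemma Finsupp.sum_univ_tsub_single_mem_Ioo {ι : Type*} [Fintype ι] {i : ι} {p : ℕ}
    {l : ι →₀ ℕ} (hl : l ≤ Finsupp.single i p) (hl0 : l ≠ 0) (hlp : l ≠ Finsupp.single i p) :
    0 < ∑ j, (Finsupp.single i p - l) j ∧ ∑ j, (Finsupp.single i p - l) j < p := by
  classical
  have hl_single : l = Finsupp.single i (l i) :=
    Finsupp.eq_single_iff.2 ⟨(Finsupp.support_mono hl).trans Finsupp.support_single_subset, rfl⟩
  have hli : l i ≤ p := by simpa using hl i
  rw [hl_single, ← Finsupp.single_tsub, Finsupp.univ_sum_single_apply]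
  rw [hl_single, Ne, Finsupp.single_eq_zero] at hl0
  rw [hl_single, Ne, (Finsupp.single_injective i).eq_iff] at hlp
  omega

namespace Stratification

variable {A : Type*} [CommRing A] {k : ℕ} {E : Type*} [AddCommGroup E]
  [Module (MvPolynomial (Fin k) A) E] [Module A E] [IsScalarTower A (MvPolynomial (Fin k) A) E]
  (S : Stratification A k E)

lemma op_comp_comm
    (hcomp : ∀ m n : Fin k →₀ ℕ,
      S.op m ∘ₗ S.op n = (∏ i, Nat.choose (m i + n i) (n i)) • S.op (m + n))
    (m n : Fin k →₀ ℕ) : S.op m ∘ₗ S.op n = S.op n ∘ₗ S.op m := by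
  have hcoef : ∏ i, (m i + n i).choose (n i) = ∏ i, (n i + m i).choose (m i) :=
    Finset.prod_congr rfl fun j _ => by rw [add_comm, Nat.choose_symm_add]
  rw [hcomp, hcomp, add_comm n m, hcoef]

lemma op_single_smul {p : ℕ} (hp : p ≠ 0) (i : Fin k) {e : E}
    (he : ∀ n : Fin k →₀ ℕ, 0 < ∑ j, n j → ∑ j, n j < p → S.op n e = 0)
    (g : MvPolynomial (Fin k) A) :
    S.op (Finsupp.single i p) (g • e)
      = g • S.op (Finsupp.single i p) e + dpOp A (Fin k) (Finsupp.single i p) g • e := by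
  have hmiddle : ∀ l ∈ Finset.Iic (Finsupp.single i p), l ≠ 0 ∧ l ≠ Finsupp.single i p →
      dpOp A (Fin k) l g • S.op (Finsupp.single i p - l) e = 0 := by
    rintro l hl ⟨hl0, hlp⟩
    obtain ⟨hpos, hlt⟩ := Finsupp.sum_univ_tsub_single_mem_Ioo (Finset.mem_Iic.1 hl) hl0 hlp
    rw [he _ hpos hlt, smul_zero]
  rw [S.leibniz, Finset.sum_eq_add_of_mem 0 (Finsupp.single i p) (by simp) (by simp)
    ((Finsupp.single_ne_zero.2 hp).symm) hmiddle, dpOp_zero, tsub_zero, tsub_self, S.op_zero]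
  rfl

end Stratification

/-- For a stratification satisfying the composition rule, the operator `∇_(p·e_i)`
(a) preserves `E⁽¹⁾ = (e | ∇_n e = 0 for 0 < |n| < p)` and (b) satisfies the twisted
Leibniz rule `∇_(p·e_i) (f^p • e) = f^p • ∇_(p·e_i) e + (∂_i f)^p • e` on `E⁽¹⁾`. -/
theorem stratification_induced_connection (p : ℕ) (hp : p.Prime)
    (A : Type*) [CommRing A] [CharP A p] (k : ℕ)
    (E : Type*) [AddCommGroup E] [Module (MvPolynomial (Fin k) A) E]
    [Module A E] [IsScalarTower A (MvPolynomial (Fin k) A) E]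
    (S : Stratification A k E)
    (hcomp : ∀ m n : Fin k →₀ ℕ,
      S.op m ∘ₗ S.op n = (∏ i, Nat.choose (m i + n i) (n i)) • S.op (m + n))
    (i : Fin k) (e : E)
    (he : ∀ n : Fin k →₀ ℕ, 0 < ∑ j, n j → ∑ j, n j < p → S.op n e = 0) :
    (∀ n : Fin k →₀ ℕ, 0 < ∑ j, n j → ∑ j, n j < p →
        S.op n (S.op (p • Finsupp.single i 1) e) = 0) ∧
    (∀ f : MvPolynomial (Fin k) A,
        S.op (p • Finsupp.single i 1) (f ^ p • e)
          = f ^ p • S.op (p • Finsupp.single i 1) e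
            + (MvPolynomial.pderiv i f : MvPolynomial (Fin k) A) ^ p • e) := by
  have := Fact.mk hp
  refine ⟨fun n hn0 hnp => ?_, fun f => ?_⟩
  · rw [← LinearMap.comp_apply, S.op_comp_comm hcomp, LinearMap.comp_apply, he n hn0 hnp,
      map_zero]
  · have hsingle : p • Finsupp.single i 1 = Finsupp.single i p := by simp
    rw [← dpOp_single_pow_char, hsingle]
    exact S.op_single_smul hp.ne_zero i he (f ^ p)
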